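/- arXiv:1307.3718 — 3 statements merged into one kernel-verified Lean document; each statement's English description precedes it below -/
import Mathlib

section
/- Define φ_k(x) = (1−x²)(1−x) R_k^{(2,1)}(x) for k ≥ 0, where R_k^{(2,1)} is the normalized Jacobi polynomial. Then the third derivative satisfies D³φ_k(x) = 2(k+1)(k+3) R_k^{(1,2)}(x). -/
/-- Classical Jacobi polynomial `P_n^{(a,b)}(x)` (real parameters), via the
hypergeometric sum representation. -/
noncomputable def jacobiP (n : ℕ) (a b x : ℝ) : ℝ :=
  (Real.Gamma (a + n + 1) / (n.factorial * Real.Gamma (a + b + n + 1))) *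
    ∑ m ∈ Finset.range (n + 1),
      (n.choose m : ℝ) * (Real.Gamma (a + b + n + m + 1) / Real.Gamma (a + m + 1)) *
        ((x - 1) / 2) ^ m

/-- Normalized Jacobi polynomial `R_n^{(a,b)}(x) = P_n^{(a,b)}(x)/P_n^{(a,b)}(1)`. -/
noncomputable def jacobiR (n : ℕ) (a b x : ℝ) : ℝ := jacobiP n a b x / jacobiP n a b 1

/-!
In the variable `t = (x - 1) / 2` one has `D = (1/2) d/dt`, `(1 - x²)(1 - x) = 8 (t² + t³)` and,
for integer parameters, `R_k^{(a,b)}(x) = ∑ₘ cₘ^{(a,b)} tᵐ` with explicit factorial coefficients.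
Multiplying by `t² + t³` gives `8 c₀ t² + 8 ∑ₘ (cₘ + cₘ₊₁) t^{m+3}`, whose third `x`-derivative is
`∑ₘ (cₘ + cₘ₊₁) (m+1)(m+2)(m+3) tᵐ`. The binomial identity
`(cₘ^{(2,1)} + cₘ₊₁^{(2,1)}) (m+1)(m+2)(m+3) = 2 (k+1)(k+3) cₘ^{(1,2)}` finishes the proof.
-/

open Finset
open scoped Nat

noncomputable def jacobiCoeff (k a b m : ℕ) : ℝ :=
  k.choose m * (a ! * (k + m + a + b)! / ((m + a)! * (k + a + b)!))

theorem jacobiCoeff_succ_self (k a b : ℕ) : jacobiCoeff k a b (k + 1) = 0 := by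
  simp [jacobiCoeff]

theorem jacobiP_natCast (k a b : ℕ) (y : ℝ) :
    jacobiP k a b y = (k + a)! / (k ! * (k + a + b)!) *
      ∑ m ∈ range (k + 1),
        k.choose m * ((k + m + a + b)! / (m + a)! : ℝ) * ((y - 1) / 2) ^ m := by
  have hΓ (n : ℕ) {s : ℝ} (hs : s = n) : Real.Gamma (s + 1) = n ! := by
    rw [hs, Real.Gamma_nat_eq_factorial]
  unfold jacobiP
  rw [hΓ (k + a) (by push_cast; ring), hΓ (k + a + b) (by push_cast; ring)]
  congr 1
  refine sum_congr rfl fun m _ => ?_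
  rw [hΓ (k + m + a + b) (by push_cast; ring), hΓ (m + a) (by push_cast; ring)]

theorem jacobiP_natCast_one (k a b : ℕ) : jacobiP k a b 1 = (k + a)! / (k ! * a !) := by
  rw [jacobiP_natCast, sum_eq_single 0 (fun m _ hm => by simp [hm]) (by simp)]
  field_simp
  simp

theorem jacobiR_natCast (k a b : ℕ) (y : ℝ) :
    jacobiR k a b y = ∑ m ∈ range (k + 1), jacobiCoeff k a b m * ((y - 1) / 2) ^ m := by
  rw [jacobiR, jacobiP_natCast, jacobiP_natCast_one, mul_sum, sum_div]
  refine sum_congr rfl fun m _ => ?_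
  unfold jacobiCoeff
  field_simp

theorem sq_add_cube_mul_sum {R : Type*} [CommRing R] (a : ℕ → R) (N : ℕ) (ha : a N = 0)
    (t : R) :
    (t ^ 2 + t ^ 3) * ∑ m ∈ range N, a m * t ^ m =
      a 0 * t ^ 2 + ∑ m ∈ range N, (a m + a (m + 1)) * t ^ (m + 3) := by
  have hshift : ∑ m ∈ range N, a m * t ^ (m + 2) =
      ∑ m ∈ range N, a (m + 1) * t ^ (m + 3) + a 0 * t ^ 2 := by
    simpa [ha] using (sum_range_succ (fun m => a m * t ^ (m + 2)) N).symm.trans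
      (sum_range_succ' (fun m => a m * t ^ (m + 2)) N)
  have h2 : ∑ m ∈ range N, t ^ 2 * (a m * t ^ m) = ∑ m ∈ range N, a m * t ^ (m + 2) :=
    sum_congr rfl fun m _ => by ring
  have h3 : ∑ m ∈ range N, t ^ 3 * (a m * t ^ m) = ∑ m ∈ range N, a m * t ^ (m + 3) :=
    sum_congr rfl fun m _ => by ring
  simp only [add_mul, sum_add_distrib, mul_sum]
  rw [h2, h3, hshift]
  ring

theorem iteratedDeriv_pow_sub_one_div_two (n j : ℕ) (x : ℝ) :
    iteratedDeriv j (fun y : ℝ => ((y - 1) / 2) ^ n) x =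
      n.descFactorial j / 2 ^ j * ((x - 1) / 2) ^ (n - j) := by
  have h : (fun y : ℝ => ((y - 1) / 2) ^ n) = fun y => (2 ^ n)⁻¹ * (y - 1) ^ n := by
    funext y; rw [div_pow, div_eq_inv_mul]
  rw [h, iteratedDeriv_const_mul_field, iteratedDeriv_comp_sub_const (f := fun z : ℝ => z ^ n)]
  dsimp only
  rw [iteratedDeriv_pow]
  rcases le_or_gt j n with hjn | hnj
  · obtain ⟨m, rfl⟩ := Nat.exists_eq_add_of_le' hjn
    rw [Nat.add_sub_cancel, div_pow, pow_add]
    field_simp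
  · simp [Nat.descFactorial_eq_zero_iff_lt.mpr hnj]

theorem iteratedDeriv_sum_pow_sub_one_div_two (a : ℕ → ℝ) (N j : ℕ) (x : ℝ) :
    iteratedDeriv j (fun y : ℝ => ∑ m ∈ range N, a m * ((y - 1) / 2) ^ (m + j)) x =
      ∑ m ∈ range N, a m * ((m + j).descFactorial j / 2 ^ j) * ((x - 1) / 2) ^ m := by
  rw [iteratedDeriv_fun_sum fun m _ => by fun_prop]
  refine sum_congr rfl fun m _ => ?_
  rw [iteratedDeriv_const_mul_field, iteratedDeriv_pow_sub_one_div_two, Nat.add_sub_cancel,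
    mul_assoc]

theorem jacobiCoeff_add_succ_mul (k a m : ℕ) :
    (jacobiCoeff k (a + 1) 1 m + jacobiCoeff k (a + 1) 1 (m + 1)) *
        ((m + 1) * (m + a + 1) * (m + a + 2)) =
      (a + 1) * (k + 1) * (k + a + 2) * jacobiCoeff k a 2 m := by
  rcases lt_or_ge k m with hkm | hmk
  · simp [jacobiCoeff, Nat.choose_eq_zero_of_lt hkm,
      Nat.choose_eq_zero_of_lt (hkm.trans m.lt_succ_self)]
  have hchoose : (k.choose (m + 1) : ℝ) = k.choose m * (k - m) / (m + 1) := by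
    rw [eq_div_iff (by positivity)]
    have h := congrArg (Nat.cast (R := ℝ)) (Nat.choose_succ_right_eq k m)
    push_cast [Nat.cast_sub hmk] at h
    exact h
  unfold jacobiCoeff
  rw [show k + m + (a + 1) + 1 = k + m + a + 2 by ring,
    show k + (m + 1) + (a + 1) + 1 = (k + m + a + 2) + 1 by ring,
    show k + (a + 1) + 1 = k + a + 2 by ring, show m + 1 + (a + 1) = (m + a) + 1 + 1 by ring,
    show m + (a + 1) = (m + a) + 1 by ring]
  simp only [Nat.factorial_succ, Nat.cast_mul, hchoose]
  push_cast
  field_simp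
  ring

theorem thirdDeriv_basis (k : ℕ) (x : ℝ) :
    iteratedDeriv 3 (fun y => (1 - y ^ 2) * (1 - y) * jacobiR k 2 1 y) x =
      2 * ((k : ℝ) + 1) * ((k : ℝ) + 3) * jacobiR k 1 2 x := by
  have hR21 := jacobiR_natCast k 2 1
  have hR12 := jacobiR_natCast k 1 2
  simp only [Nat.cast_ofNat, Nat.cast_one] at hR21 hR12
  have hφ : (fun y => (1 - y ^ 2) * (1 - y) * jacobiR k 2 1 y) = fun y =>
      8 * jacobiCoeff k 2 1 0 * ((y - 1) / 2) ^ 2 + ∑ m ∈ range (k + 1),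
        8 * (jacobiCoeff k 2 1 m + jacobiCoeff k 2 1 (m + 1)) * ((y - 1) / 2) ^ (m + 3) := by
    funext y
    have hweight : (1 - y ^ 2) * (1 - y) = 8 * (((y - 1) / 2) ^ 2 + ((y - 1) / 2) ^ 3) := by ring
    rw [hweight, mul_assoc, hR21, sq_add_cube_mul_sum _ (k + 1) (jacobiCoeff_succ_self k 2 1),
      mul_add, mul_sum]
    simp only [mul_assoc]
  have hquad : iteratedDeriv 3 (fun y : ℝ => ((y - 1) / 2) ^ 2) x = 0 := by
    simp [iteratedDeriv_pow_sub_one_div_two]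
  rw [hφ, iteratedDeriv_fun_add (by fun_prop) (by fun_prop), iteratedDeriv_const_mul_field, hquad,
    mul_zero, zero_add, iteratedDeriv_sum_pow_sub_one_div_two, hR12, mul_sum]
  refine sum_congr rfl fun m _ => ?_
  have hdesc : ((m + 3).descFactorial 3 : ℝ) = (m + 1) * (m + 1 + 1) * (m + 1 + 2) := by
    simp only [Nat.succ_descFactorial_succ, Nat.descFactorial_zero]
    push_cast
    ring
  rw [hdesc]
  linear_combination ((x - 1) / 2) ^ m * jacobiCoeff_add_succ_mul k 1 m
end

section
/- The generalized Jacobi polynomial J_k^{(-2,-1)}(x) = (1−x²)(1−x) R_{k-3}^{(2,1)}(x) admits, for k ≥ 3, the Legendre expansion J_k^{(-2,-1)}(x) = (4/((k−1)(2k−3))) [L_{k-3}(x) − ((2k−3)/(2k−1)) L_{k-2}(x) − L_{k-1}(x) + ((2k−3)/(2k−1)) L_k(x)], where L_n denotes the Legendre polynomial of degree n. -/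
set_option maxHeartbeats 2000000

/-- Legendre polynomial `L_n = P_n^{(0,0)}`. -/
noncomputable def legendreL (n : ℕ) (x : ℝ) : ℝ := jacobiP n 0 0 x

lemma cc (a b : ℕ) : (((a+b).choose a : ℕ) : ℝ) = (a+b).factorial / (a.factorial * b.factorial) := by
  rw [Nat.cast_choose ℝ (Nat.le_add_right a b)]
  simp

lemma fs (m : ℕ) : (((m+1).factorial : ℕ) : ℝ) = (m+1) * m.factorial := by
  push_cast [Nat.factorial_succ]; ring

lemma fpos (m : ℕ) : (0:ℝ) < (m.factorial : ℝ) := by positivity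

lemma legendreL_eq (n : ℕ) (x : ℝ) :
    legendreL n x = ∑ m ∈ Finset.range (n+1),
      ((n.choose m : ℕ) : ℝ) * (((n+m).choose m : ℕ) : ℝ) * ((x-1)/2)^m := by
  unfold legendreL jacobiP
  rw [Finset.mul_sum]
  refine Finset.sum_congr rfl fun m _ => ?_
  have G : ∀ N : ℕ, Real.Gamma ((N:ℝ)+1) = N.factorial := fun N => Real.Gamma_nat_eq_factorial N
  rw [show (0:ℝ) + (n:ℝ) + 1 = (n:ℝ)+1 by ring, show (0:ℝ)+0+(n:ℝ)+1 = (n:ℝ)+1 by ring,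
      show (0:ℝ)+0+(n:ℝ)+(m:ℝ)+1 = ((n+m : ℕ):ℝ)+1 by push_cast; ring,
      show (0:ℝ)+(m:ℝ)+1 = ((m:ℕ):ℝ)+1 by push_cast; ring, G, G, G]
  have hc : (((n+m).choose m : ℕ) : ℝ) = ((n+m).factorial : ℝ) / (m.factorial * n.factorial) := by
    rw [show n+m = m+n by omega, cc m n, show m+n = n+m by omega]
  rw [hc]
  have h1 := (fpos n).ne'
  have h2 := (fpos m).ne'
  field_simp

lemma jacobiP21_eq (n : ℕ) (x : ℝ) :
    jacobiP n 2 1 x = ∑ m ∈ Finset.range (n+1),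
      ((n:ℝ)+1)/((n:ℝ)+3) * ((n.choose m : ℕ) : ℝ) * (((n+m+3).choose (m+2) : ℕ) : ℝ)
        * ((x-1)/2)^m := by
  unfold jacobiP
  rw [Finset.mul_sum]
  refine Finset.sum_congr rfl fun m _ => ?_
  have G : ∀ N : ℕ, Real.Gamma ((N:ℝ)+1) = N.factorial := fun N => Real.Gamma_nat_eq_factorial N
  rw [show (2:ℝ) + (n:ℝ) + 1 = ((n+2:ℕ):ℝ)+1 by push_cast; ring,
      show (2:ℝ)+1+(n:ℝ)+1 = ((n+3:ℕ):ℝ)+1 by push_cast; ring,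
      show (2:ℝ)+1+(n:ℝ)+(m:ℝ)+1 = ((n+m+3 : ℕ):ℝ)+1 by push_cast; ring,
      show (2:ℝ)+(m:ℝ)+1 = ((m+2:ℕ):ℝ)+1 by push_cast; ring, G, G, G, G]
  have hc : (((n+m+3).choose (m+2) : ℕ) : ℝ)
      = ((n+m+3).factorial : ℝ) / ((m+2).factorial * (n+1).factorial) := by
    rw [show n+m+3 = (m+2)+(n+1) by omega, cc (m+2) (n+1), show (m+2)+(n+1) = n+m+3 by omega]
  rw [hc]
  have e1 : ((n+1).factorial : ℝ) = ((n:ℝ)+1) * n.factorial := fs n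
  have e2 : ((n+2).factorial : ℝ) = ((n:ℝ)+2)*((n:ℝ)+1) * n.factorial := by
    rw [show n+2 = (n+1)+1 from rfl, fs, e1]; push_cast; ring
  have e3 : ((n+3).factorial : ℝ) = ((n:ℝ)+3)*((n:ℝ)+2)*((n:ℝ)+1) * n.factorial := by
    rw [show n+3 = (n+2)+1 from rfl, fs, e2]; push_cast; ring
  rw [e1, e2, e3]
  have h1 := (fpos n).ne'
  have h2 := (fpos (m+2)).ne'
  have h3 := (fpos (n+m+3)).ne'
  have h4 : (n:ℝ)+1 ≠ 0 := by positivity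
  have h5 : (n:ℝ)+2 ≠ 0 := by positivity
  have h6 : (n:ℝ)+3 ≠ 0 := by positivity
  field_simp

lemma jacobiP21_one (n : ℕ) : jacobiP n 2 1 1 = ((n:ℝ)+1)*((n:ℝ)+2)/2 := by
  rw [jacobiP21_eq]
  rw [Finset.sum_eq_single_of_mem 0 (by simp : (0:ℕ) ∈ Finset.range (n+1))]
  · have hc : (((n+0+3).choose (0+2) : ℕ) : ℝ) = ((n:ℝ)+3)*((n:ℝ)+2)/2 := by
      rw [show n+0+3 = 2+(n+1) by omega, cc 2 (n+1), show 2+(n+1) = (n+2)+1 by omega, fs,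
        show n+2 = (n+1)+1 from rfl, fs, fs]
      have h1 := (fpos n).ne'
      push_cast
      field_simp
      ring
    rw [hc]
    have h6 : (n:ℝ)+3 ≠ 0 := by positivity
    simp
    field_simp
  · intro m _ hm
    have : ((1:ℝ)-1)/2 = 0 := by norm_num
    rw [this, zero_pow hm, mul_zero]

lemma jacobiR21_eq (n : ℕ) (x : ℝ) :
    jacobiR n 2 1 x = ∑ m ∈ Finset.range (n+1),
      2 * ((n.choose m : ℕ) : ℝ) * (((n+m+3).choose (m+2) : ℕ) : ℝ) / (((n:ℝ)+2)*((n:ℝ)+3))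
        * ((x-1)/2)^m := by
  unfold jacobiR
  rw [jacobiP21_one, jacobiP21_eq, Finset.sum_div]
  refine Finset.sum_congr rfl fun m _ => ?_
  have h4 : (n:ℝ)+1 ≠ 0 := by positivity
  have h5 : (n:ℝ)+2 ≠ 0 := by positivity
  have h6 : (n:ℝ)+3 ≠ 0 := by positivity
  field_simp

-- D 0 = 0
lemma key0 (n : ℕ) :
    4 / (((n:ℝ)+2)*(2*(n:ℝ)+3)) *
      ( ((n.choose 0 : ℕ) : ℝ) * (((n+0).choose 0 : ℕ) : ℝ)
        - (2*(n:ℝ)+3)/(2*(n:ℝ)+5) * ((((n+1).choose 0 : ℕ)) : ℝ) * (((n+1+0).choose 0 : ℕ) : ℝ)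
        - (((n+2).choose 0 : ℕ) : ℝ) * (((n+2+0).choose 0 : ℕ) : ℝ)
        + (2*(n:ℝ)+3)/(2*(n:ℝ)+5) * (((n+3).choose 0 : ℕ) : ℝ) * (((n+3+0).choose 0 : ℕ) : ℝ) )
    = 0 := by
  simp

-- D 1 = 0
lemma key1 (n : ℕ) :
    4 / (((n:ℝ)+2)*(2*(n:ℝ)+3)) *
      ( ((n.choose 1 : ℕ) : ℝ) * (((n+1).choose 1 : ℕ) : ℝ)
        - (2*(n:ℝ)+3)/(2*(n:ℝ)+5) * ((((n+1).choose 1 : ℕ)) : ℝ) * (((n+1+1).choose 1 : ℕ) : ℝ)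
        - (((n+2).choose 1 : ℕ) : ℝ) * (((n+2+1).choose 1 : ℕ) : ℝ)
        + (2*(n:ℝ)+3)/(2*(n:ℝ)+5) * (((n+3).choose 1 : ℕ) : ℝ) * (((n+3+1).choose 1 : ℕ) : ℝ) )
    = 0 := by
  simp only [Nat.choose_one_right]
  have h5 : (2*(n:ℝ)+5) ≠ 0 := by positivity
  apply mul_eq_zero_of_right
  push_cast
  field_simp
  ring

-- cast of choose 2
lemma ch2 (n : ℕ) : ((n.choose 2 : ℕ) : ℝ) = (n:ℝ)*((n:ℝ)-1)/2 := by
  match n with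
  | 0 => norm_num
  | 1 => norm_num
  | (m+2) =>
    rw [show m+2 = 2+m by omega, cc 2 m, show 2+m = (m+1)+1 by omega, fs, fs]
    have h1 := (fpos m).ne'
    push_cast
    field_simp
    ring

-- D 2 = 8 * A 0
lemma key2 (n : ℕ) :
    4 / (((n:ℝ)+2)*(2*(n:ℝ)+3)) *
      ( ((n.choose 2 : ℕ) : ℝ) * (((n+2).choose 2 : ℕ) : ℝ)
        - (2*(n:ℝ)+3)/(2*(n:ℝ)+5) * ((((n+1).choose 2 : ℕ)) : ℝ) * (((n+1+2).choose 2 : ℕ) : ℝ)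
        - (((n+2).choose 2 : ℕ) : ℝ) * (((n+2+2).choose 2 : ℕ) : ℝ)
        + (2*(n:ℝ)+3)/(2*(n:ℝ)+5) * (((n+3).choose 2 : ℕ) : ℝ) * (((n+3+2).choose 2 : ℕ) : ℝ) )
    = 8 * (2 * ((n.choose 0 : ℕ) : ℝ) * (((n+0+3).choose (0+2) : ℕ) : ℝ)
        / (((n:ℝ)+2)*((n:ℝ)+3))) := by
  simp only [show n+0+3 = n+3 from rfl, show 0+2 = 2 from rfl, ch2, Nat.choose_zero_right]
  have h2 : (n:ℝ)+2 ≠ 0 := by positivity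
  have h3 : (n:ℝ)+3 ≠ 0 := by positivity
  have h4 : (2*(n:ℝ)+3) ≠ 0 := by positivity
  have h5 : (2*(n:ℝ)+5) ≠ 0 := by positivity
  push_cast
  field_simp
  ring

lemma key (n j : ℕ) :
    4 / (((n:ℝ)+2)*(2*(n:ℝ)+3)) *
      ( (((n.choose (j+3) : ℕ) : ℝ) * (((n+(j+3)).choose (j+3) : ℕ) : ℝ))
        - (2*(n:ℝ)+3)/(2*(n:ℝ)+5) *
            (((((n+1).choose (j+3) : ℕ)) : ℝ) * (((n+1+(j+3)).choose (j+3) : ℕ) : ℝ))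
        - ((((n+2).choose (j+3) : ℕ) : ℝ) * (((n+2+(j+3)).choose (j+3) : ℕ) : ℝ))
        + (2*(n:ℝ)+3)/(2*(n:ℝ)+5) *
            ((((n+3).choose (j+3) : ℕ) : ℝ) * (((n+3+(j+3)).choose (j+3) : ℕ) : ℝ)) )
  = 8 * ( 2 * (((n.choose (j+1) : ℕ) : ℝ) * (((n+(j+1)+3).choose (j+1+2) : ℕ) : ℝ))
            / (((n:ℝ)+2)*((n:ℝ)+3))
        + 2 * (((n.choose j : ℕ) : ℝ) * (((n+j+3).choose (j+2) : ℕ) : ℝ))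
            / (((n:ℝ)+2)*((n:ℝ)+3)) ) := by
  rcases le_or_gt (j+3) n with h | h
  · obtain ⟨d, rfl⟩ : ∃ d, n = j + 3 + d := ⟨n - (j+3), by omega⟩
    have c1 : (((j+3+d).choose (j+3) : ℕ) : ℝ)
        = ((j+3+d).factorial : ℝ) / ((j+3).factorial * d.factorial) := cc (j+3) d
    have c2 : ((((j+3+d)+(j+3)).choose (j+3) : ℕ) : ℝ)
        = ((2*j+6+d).factorial : ℝ) / ((j+3).factorial * (j+3+d).factorial) := by
      rw [show (j+3+d)+(j+3) = (j+3)+(j+3+d) by omega, cc (j+3) (j+3+d),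
        show (j+3)+(j+3+d) = 2*j+6+d by omega]
    have c3 : ((((j+3+d)+1).choose (j+3) : ℕ) : ℝ)
        = ((j+4+d).factorial : ℝ) / ((j+3).factorial * (d+1).factorial) := by
      rw [show (j+3+d)+1 = (j+3)+(d+1) by omega, cc (j+3) (d+1),
        show (j+3)+(d+1) = j+4+d by omega]
    have c4 : ((((j+3+d)+1+(j+3)).choose (j+3) : ℕ) : ℝ)
        = ((2*j+7+d).factorial : ℝ) / ((j+3).factorial * (j+4+d).factorial) := by
      rw [show (j+3+d)+1+(j+3) = (j+3)+(j+4+d) by omega, cc (j+3) (j+4+d),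
        show (j+3)+(j+4+d) = 2*j+7+d by omega]
    have c5 : ((((j+3+d)+2).choose (j+3) : ℕ) : ℝ)
        = ((j+5+d).factorial : ℝ) / ((j+3).factorial * (d+2).factorial) := by
      rw [show (j+3+d)+2 = (j+3)+(d+2) by omega, cc (j+3) (d+2),
        show (j+3)+(d+2) = j+5+d by omega]
    have c6 : ((((j+3+d)+2+(j+3)).choose (j+3) : ℕ) : ℝ)
        = ((2*j+8+d).factorial : ℝ) / ((j+3).factorial * (j+5+d).factorial) := by
      rw [show (j+3+d)+2+(j+3) = (j+3)+(j+5+d) by omega, cc (j+3) (j+5+d),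
        show (j+3)+(j+5+d) = 2*j+8+d by omega]
    have c7 : ((((j+3+d)+3).choose (j+3) : ℕ) : ℝ)
        = ((j+6+d).factorial : ℝ) / ((j+3).factorial * (d+3).factorial) := by
      rw [show (j+3+d)+3 = (j+3)+(d+3) by omega, cc (j+3) (d+3),
        show (j+3)+(d+3) = j+6+d by omega]
    have c8 : ((((j+3+d)+3+(j+3)).choose (j+3) : ℕ) : ℝ)
        = ((2*j+9+d).factorial : ℝ) / ((j+3).factorial * (j+6+d).factorial) := by
      rw [show (j+3+d)+3+(j+3) = (j+3)+(j+6+d) by omega, cc (j+3) (j+6+d),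
        show (j+3)+(j+6+d) = 2*j+9+d by omega]
    have c9 : (((j+3+d).choose (j+1) : ℕ) : ℝ)
        = ((j+3+d).factorial : ℝ) / ((j+1).factorial * (d+2).factorial) := by
      rw [show j+3+d = (j+1)+(d+2) by omega, cc (j+1) (d+2),
        show (j+1)+(d+2) = j+3+d by omega]
    have c10 : ((((j+3+d)+(j+1)+3).choose (j+1+2) : ℕ) : ℝ)
        = ((2*j+7+d).factorial : ℝ) / ((j+3).factorial * (j+4+d).factorial) := by
      rw [show (j+3+d)+(j+1)+3 = (j+3)+(j+4+d) by omega, show j+1+2 = j+3 from rfl,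
        cc (j+3) (j+4+d), show (j+3)+(j+4+d) = 2*j+7+d by omega]
    have c11 : (((j+3+d).choose j : ℕ) : ℝ)
        = ((j+3+d).factorial : ℝ) / (j.factorial * (d+3).factorial) := by
      rw [show j+3+d = j+(d+3) by omega, cc j (d+3), show j+(d+3) = j+3+d by omega]
    have c12 : ((((j+3+d)+j+3).choose (j+2) : ℕ) : ℝ)
        = ((2*j+6+d).factorial : ℝ) / ((j+2).factorial * (j+4+d).factorial) := by
      rw [show (j+3+d)+j+3 = (j+2)+(j+4+d) by omega, cc (j+2) (j+4+d),
        show (j+2)+(j+4+d) = 2*j+6+d by omega]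
    have e1 : ((j+1).factorial : ℝ) = ((j:ℝ)+1) * j.factorial := fs j
    have e2 : ((j+2).factorial : ℝ) = ((j:ℝ)+2)*((j:ℝ)+1) * j.factorial := by
      rw [show j+2 = (j+1)+1 from rfl, fs, e1]; push_cast; ring
    have e3 : ((j+3).factorial : ℝ) = ((j:ℝ)+3)*((j:ℝ)+2)*((j:ℝ)+1) * j.factorial := by
      rw [show j+3 = (j+2)+1 from rfl, fs, e2]; push_cast; ring
    have f1 : ((d+1).factorial : ℝ) = ((d:ℝ)+1) * d.factorial := fs d
    have f2 : ((d+2).factorial : ℝ) = ((d:ℝ)+2)*((d:ℝ)+1) * d.factorial := by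
      rw [show d+2 = (d+1)+1 from rfl, fs, f1]; push_cast; ring
    have f3 : ((d+3).factorial : ℝ) = ((d:ℝ)+3)*((d:ℝ)+2)*((d:ℝ)+1) * d.factorial := by
      rw [show d+3 = (d+2)+1 from rfl, fs, f2]; push_cast; ring
    have g1 : ((j+4+d).factorial : ℝ) = ((j:ℝ)+4+d) * (j+3+d).factorial := by
      rw [show j+4+d = (j+3+d)+1 by omega, fs]; push_cast; ring
    have g2 : ((j+5+d).factorial : ℝ) = ((j:ℝ)+5+d)*((j:ℝ)+4+d) * (j+3+d).factorial := by
      rw [show j+5+d = (j+4+d)+1 by omega, fs, g1]; push_cast; ring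
    have g3 : ((j+6+d).factorial : ℝ)
        = ((j:ℝ)+6+d)*((j:ℝ)+5+d)*((j:ℝ)+4+d) * (j+3+d).factorial := by
      rw [show j+6+d = (j+5+d)+1 by omega, fs, g2]; push_cast; ring
    have q1 : ((2*j+7+d).factorial : ℝ) = (2*(j:ℝ)+7+d) * (2*j+6+d).factorial := by
      rw [show 2*j+7+d = (2*j+6+d)+1 by omega, fs]; push_cast; ring
    have q2 : ((2*j+8+d).factorial : ℝ)
        = (2*(j:ℝ)+8+d)*(2*(j:ℝ)+7+d) * (2*j+6+d).factorial := by
      rw [show 2*j+8+d = (2*j+7+d)+1 by omega, fs, q1]; push_cast; ring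
    have q3 : ((2*j+9+d).factorial : ℝ)
        = (2*(j:ℝ)+9+d)*(2*(j:ℝ)+8+d)*(2*(j:ℝ)+7+d) * (2*j+6+d).factorial := by
      rw [show 2*j+9+d = (2*j+8+d)+1 by omega, fs, q2]; push_cast; ring
    have h1 := (fpos j).ne'
    have h2 := (fpos d).ne'
    have h3 := (fpos (j+3+d)).ne'
    have h4 := (fpos (2*j+6+d)).ne'
    have h5 := (fpos (j+3)).ne'
    -- the common factor
    have T1 : (((j+3+d).choose (j+3) : ℕ) : ℝ) * ((((j+3+d)+(j+3)).choose (j+3) : ℕ) : ℝ)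
        = ((2*j+6+d).factorial : ℝ) / ((j+3).factorial * (j+3).factorial * d.factorial) * 1 := by
      rw [c1, c2]; field_simp
    have T2 : ((((j+3+d)+1).choose (j+3) : ℕ) : ℝ) * ((((j+3+d)+1+(j+3)).choose (j+3) : ℕ) : ℝ)
        = ((2*j+6+d).factorial : ℝ) / ((j+3).factorial * (j+3).factorial * d.factorial)
          * ((2*(j:ℝ)+7+d) / ((d:ℝ)+1)) := by
      rw [c3, c4, g1, f1, q1]; field_simp
    have T3 : ((((j+3+d)+2).choose (j+3) : ℕ) : ℝ) * ((((j+3+d)+2+(j+3)).choose (j+3) : ℕ) : ℝ)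
        = ((2*j+6+d).factorial : ℝ) / ((j+3).factorial * (j+3).factorial * d.factorial)
          * ((2*(j:ℝ)+8+d)*(2*(j:ℝ)+7+d) / (((d:ℝ)+2)*((d:ℝ)+1))) := by
      rw [c5, c6, g2, f2, q2]; field_simp
    have T4 : ((((j+3+d)+3).choose (j+3) : ℕ) : ℝ) * ((((j+3+d)+3+(j+3)).choose (j+3) : ℕ) : ℝ)
        = ((2*j+6+d).factorial : ℝ) / ((j+3).factorial * (j+3).factorial * d.factorial)
          * ((2*(j:ℝ)+9+d)*(2*(j:ℝ)+8+d)*(2*(j:ℝ)+7+d)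
              / (((d:ℝ)+3)*((d:ℝ)+2)*((d:ℝ)+1))) := by
      rw [c7, c8, g3, f3, q3]; field_simp
    have TA : (((j+3+d).choose (j+1) : ℕ) : ℝ) * ((((j+3+d)+(j+1)+3).choose (j+1+2) : ℕ) : ℝ)
        = ((2*j+6+d).factorial : ℝ) / ((j+3).factorial * (j+3).factorial * d.factorial)
          * ((2*(j:ℝ)+7+d)*((j:ℝ)+3)*((j:ℝ)+2)
              / (((d:ℝ)+2)*((d:ℝ)+1)*((j:ℝ)+4+d))) := by
      rw [c9, c10, e3, e1, f2, g1, q1]; field_simp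
    have TB : (((j+3+d).choose j : ℕ) : ℝ) * ((((j+3+d)+j+3).choose (j+2) : ℕ) : ℝ)
        = ((2*j+6+d).factorial : ℝ) / ((j+3).factorial * (j+3).factorial * d.factorial)
          * (((j:ℝ)+3)*((j:ℝ)+3)*((j:ℝ)+2)*((j:ℝ)+1)
              / (((d:ℝ)+3)*((d:ℝ)+2)*((d:ℝ)+1)*((j:ℝ)+4+d))) := by
      rw [c11, c12, e3, e2, f3, g1]; field_simp
    rw [T1, T2, T3, T4, TA, TB]
    have hd1 : ((d:ℝ)+1) ≠ 0 := by positivity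
    have hd2 : ((d:ℝ)+2) ≠ 0 := by positivity
    have hd3 : ((d:ℝ)+3) ≠ 0 := by positivity
    have hj4 : ((j:ℝ)+4+d) ≠ 0 := by positivity
    have hn2 : (((j+3+d : ℕ):ℝ)+2) ≠ 0 := by positivity
    have hn3 : (((j+3+d : ℕ):ℝ)+3) ≠ 0 := by positivity
    have hn5 : (2*((j+3+d : ℕ):ℝ)+3) ≠ 0 := by positivity
    have hn6 : (2*((j+3+d : ℕ):ℝ)+5) ≠ 0 := by positivity
    have q : (4 : ℝ) / ((((j+3+d : ℕ):ℝ)+2)*(2*((j+3+d : ℕ):ℝ)+3)) *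
        ( 1 - (2*((j+3+d : ℕ):ℝ)+3)/(2*((j+3+d : ℕ):ℝ)+5) * ((2*(j:ℝ)+7+d) / ((d:ℝ)+1))
          - ((2*(j:ℝ)+8+d)*(2*(j:ℝ)+7+d) / (((d:ℝ)+2)*((d:ℝ)+1)))
          + (2*((j+3+d : ℕ):ℝ)+3)/(2*((j+3+d : ℕ):ℝ)+5) *
              ((2*(j:ℝ)+9+d)*(2*(j:ℝ)+8+d)*(2*(j:ℝ)+7+d) / (((d:ℝ)+3)*((d:ℝ)+2)*((d:ℝ)+1))) )
      = 8 * ( 2 * ((2*(j:ℝ)+7+d)*((j:ℝ)+3)*((j:ℝ)+2) / (((d:ℝ)+2)*((d:ℝ)+1)*((j:ℝ)+4+d)))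
              / ((((j+3+d : ℕ):ℝ)+2)*(((j+3+d : ℕ):ℝ)+3))
            + 2 * (((j:ℝ)+3)*((j:ℝ)+3)*((j:ℝ)+2)*((j:ℝ)+1)
              / (((d:ℝ)+3)*((d:ℝ)+2)*((d:ℝ)+1)*((j:ℝ)+4+d)))
              / ((((j+3+d : ℕ):ℝ)+2)*(((j+3+d : ℕ):ℝ)+3)) ) := by
      have hc : ((j+3+d : ℕ):ℝ) = (j:ℝ)+3+(d:ℝ) := by push_cast; ring
      rw [hc] at *
      field_simp
      ring
    linear_combination q * (((2*j+6+d).factorial : ℝ)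
      / ((j+3).factorial * (j+3).factorial * d.factorial))
  · have e1 : ((j+1).factorial : ℝ) = ((j:ℝ)+1) * j.factorial := fs j
    have e2 : ((j+2).factorial : ℝ) = ((j:ℝ)+2)*((j:ℝ)+1) * j.factorial := by
      rw [show j+2 = (j+1)+1 from rfl, fs, e1]; push_cast; ring
    have e3 : ((j+3).factorial : ℝ) = ((j:ℝ)+3)*((j:ℝ)+2)*((j:ℝ)+1) * j.factorial := by
      rw [show j+3 = (j+2)+1 from rfl, fs, e2]; push_cast; ring
    have e4 : ((j+4).factorial : ℝ) = ((j:ℝ)+4)*((j:ℝ)+3)*((j:ℝ)+2)*((j:ℝ)+1) * j.factorial := by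
      rw [show j+4 = (j+3)+1 from rfl, fs, e3]; push_cast; ring
    have e5 : ((j+5).factorial : ℝ)
        = ((j:ℝ)+5)*((j:ℝ)+4)*((j:ℝ)+3)*((j:ℝ)+2)*((j:ℝ)+1) * j.factorial := by
      rw [show j+5 = (j+4)+1 from rfl, fs, e4]; push_cast; ring
    have hj := (fpos j).ne'
    have hf1 : ((Nat.factorial 1 : ℕ) : ℝ) = 1 := by norm_num [Nat.factorial]
    have hf2 : ((Nat.factorial 2 : ℕ) : ℝ) = 2 := by norm_num [Nat.factorial]
    rcases (by omega : n = j+2 ∨ n = j+1 ∨ n = j ∨ n+1 ≤ j) with rfl | rfl | h3 | hge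
    · -- n = j + 2
      have z1 : (j+2).choose (j+3) = 0 := Nat.choose_eq_zero_of_lt (by omega)
      have c1 : (((j+2+1).choose (j+3) : ℕ) : ℝ) = 1 := by
        rw [show j+2+1 = j+3 by omega, Nat.choose_self]; norm_num
      have c2 : (((j+2+1+(j+3)).choose (j+3) : ℕ) : ℝ)
          = ((2*j+6).factorial : ℝ) / ((j+3).factorial * (j+3).factorial) := by
        rw [show j+2+1+(j+3) = (j+3)+(j+3) by omega, cc, show (j+3)+(j+3) = 2*j+6 by omega]
      have c3 : (((j+2+2).choose (j+3) : ℕ) : ℝ)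
          = ((j+4).factorial : ℝ) / ((j+3).factorial * (Nat.factorial 1)) := by
        rw [show j+2+2 = (j+3)+1 by omega, cc, show (j+3)+1 = j+4 by omega]
      have c4 : (((j+2+2+(j+3)).choose (j+3) : ℕ) : ℝ)
          = ((2*j+7).factorial : ℝ) / ((j+3).factorial * (j+4).factorial) := by
        rw [show j+2+2+(j+3) = (j+3)+(j+4) by omega, cc, show (j+3)+(j+4) = 2*j+7 by omega]
      have c5 : (((j+2+3).choose (j+3) : ℕ) : ℝ)
          = ((j+5).factorial : ℝ) / ((j+3).factorial * (Nat.factorial 2)) := by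
        rw [show j+2+3 = (j+3)+2 by omega, cc, show (j+3)+2 = j+5 by omega]
      have c6 : (((j+2+3+(j+3)).choose (j+3) : ℕ) : ℝ)
          = ((2*j+8).factorial : ℝ) / ((j+3).factorial * (j+5).factorial) := by
        rw [show j+2+3+(j+3) = (j+3)+(j+5) by omega, cc, show (j+3)+(j+5) = 2*j+8 by omega]
      have c7 : (((j+2).choose (j+1) : ℕ) : ℝ)
          = ((j+2).factorial : ℝ) / ((j+1).factorial * (Nat.factorial 1)) := by
        rw [show j+2 = (j+1)+1 by omega, cc, show (j+1)+1 = j+2 by omega]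
      have c8 : (((j+2+(j+1)+3).choose (j+1+2) : ℕ) : ℝ)
          = ((2*j+6).factorial : ℝ) / ((j+3).factorial * (j+3).factorial) := by
        rw [show j+2+(j+1)+3 = (j+3)+(j+3) by omega, show j+1+2 = j+3 from rfl, cc,
          show (j+3)+(j+3) = 2*j+6 by omega]
      have c9 : (((j+2).choose j : ℕ) : ℝ)
          = ((j+2).factorial : ℝ) / (j.factorial * (Nat.factorial 2)) := by
        have := cc j 2
        rwa [show j+2 = j+2 from rfl] at this
      have c10 : (((j+2+j+3).choose (j+2) : ℕ) : ℝ)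
          = ((2*j+5).factorial : ℝ) / ((j+2).factorial * (j+3).factorial) := by
        rw [show j+2+j+3 = (j+2)+(j+3) by omega, cc, show (j+2)+(j+3) = 2*j+5 by omega]
      have q1 : ((2*j+6).factorial : ℝ) = (2*(j:ℝ)+6) * (2*j+5).factorial := by
        rw [show 2*j+6 = (2*j+5)+1 by omega, fs]; push_cast; ring
      have q2 : ((2*j+7).factorial : ℝ) = (2*(j:ℝ)+7)*(2*(j:ℝ)+6) * (2*j+5).factorial := by
        rw [show 2*j+7 = (2*j+6)+1 by omega, fs, q1]; push_cast; ring
      have q3 : ((2*j+8).factorial : ℝ)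
          = (2*(j:ℝ)+8)*(2*(j:ℝ)+7)*(2*(j:ℝ)+6) * (2*j+5).factorial := by
        rw [show 2*j+8 = (2*j+7)+1 by omega, fs, q2]; push_cast; ring
      have hq := (fpos (2*j+5)).ne'
      rw [z1, c1, c2, c3, c4, c5, c6, c7, c8, c9, c10, q1, q2, q3, e5, e4, e3, e2, e1, hf1, hf2]
      push_cast
      field_simp
      ring
    · -- n = j + 1
      have z1 : (j+1).choose (j+3) = 0 := Nat.choose_eq_zero_of_lt (by omega)
      have z2 : (j+1+1).choose (j+3) = 0 := Nat.choose_eq_zero_of_lt (by omega)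
      have c1 : (((j+1+2).choose (j+3) : ℕ) : ℝ) = 1 := by
        rw [show j+1+2 = j+3 by omega, Nat.choose_self]; norm_num
      have c2 : (((j+1+2+(j+3)).choose (j+3) : ℕ) : ℝ)
          = ((2*j+6).factorial : ℝ) / ((j+3).factorial * (j+3).factorial) := by
        rw [show j+1+2+(j+3) = (j+3)+(j+3) by omega, cc, show (j+3)+(j+3) = 2*j+6 by omega]
      have c3 : (((j+1+3).choose (j+3) : ℕ) : ℝ)
          = ((j+4).factorial : ℝ) / ((j+3).factorial * (Nat.factorial 1)) := by
        rw [show j+1+3 = (j+3)+1 by omega, cc, show (j+3)+1 = j+4 by omega]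
      have c4 : (((j+1+3+(j+3)).choose (j+3) : ℕ) : ℝ)
          = ((2*j+7).factorial : ℝ) / ((j+3).factorial * (j+4).factorial) := by
        rw [show j+1+3+(j+3) = (j+3)+(j+4) by omega, cc, show (j+3)+(j+4) = 2*j+7 by omega]
      have c5 : (((j+1).choose (j+1) : ℕ) : ℝ) = 1 := by rw [Nat.choose_self]; norm_num
      have c6 : (((j+1+(j+1)+3).choose (j+1+2) : ℕ) : ℝ)
          = ((2*j+5).factorial : ℝ) / ((j+3).factorial * (j+2).factorial) := by
        rw [show j+1+(j+1)+3 = (j+3)+(j+2) by omega, show j+1+2 = j+3 from rfl, cc,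
          show (j+3)+(j+2) = 2*j+5 by omega]
      have c7 : (((j+1).choose j : ℕ) : ℝ)
          = ((j+1).factorial : ℝ) / (j.factorial * (Nat.factorial 1)) := by
        have := cc j 1
        rwa [show j+1 = j+1 from rfl] at this
      have c8 : (((j+1+j+3).choose (j+2) : ℕ) : ℝ)
          = ((2*j+4).factorial : ℝ) / ((j+2).factorial * (j+2).factorial) := by
        rw [show j+1+j+3 = (j+2)+(j+2) by omega, cc, show (j+2)+(j+2) = 2*j+4 by omega]
      have q1 : ((2*j+5).factorial : ℝ) = (2*(j:ℝ)+5) * (2*j+4).factorial := by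
        rw [show 2*j+5 = (2*j+4)+1 by omega, fs]; push_cast; ring
      have q2 : ((2*j+6).factorial : ℝ) = (2*(j:ℝ)+6)*(2*(j:ℝ)+5) * (2*j+4).factorial := by
        rw [show 2*j+6 = (2*j+5)+1 by omega, fs, q1]; push_cast; ring
      have q3 : ((2*j+7).factorial : ℝ)
          = (2*(j:ℝ)+7)*(2*(j:ℝ)+6)*(2*(j:ℝ)+5) * (2*j+4).factorial := by
        rw [show 2*j+7 = (2*j+6)+1 by omega, fs, q2]; push_cast; ring
      have hq := (fpos (2*j+4)).ne'
      rw [z1, z2, c1, c2, c3, c4, c5, c6, c7, c8, q1, q2, q3, e4, e3, e2, e1, hf1]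
      push_cast
      field_simp
      ring
    · -- n = j
      rw [h3]
      have z1 : j.choose (j+3) = 0 := Nat.choose_eq_zero_of_lt (by omega)
      have z2 : (j+1).choose (j+3) = 0 := Nat.choose_eq_zero_of_lt (by omega)
      have z3 : (j+2).choose (j+3) = 0 := Nat.choose_eq_zero_of_lt (by omega)
      have z4 : j.choose (j+1) = 0 := Nat.choose_eq_zero_of_lt (by omega)
      have c1 : (((j+3).choose (j+3) : ℕ) : ℝ) = 1 := by rw [Nat.choose_self]; norm_num
      have c2 : (((j+3+(j+3)).choose (j+3) : ℕ) : ℝ)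
          = ((2*j+6).factorial : ℝ) / ((j+3).factorial * (j+3).factorial) := by
        rw [show j+3+(j+3) = (j+3)+(j+3) from rfl, cc, show (j+3)+(j+3) = 2*j+6 by omega]
      have c3 : ((j.choose j : ℕ) : ℝ) = 1 := by rw [Nat.choose_self]; norm_num
      have c4 : (((j+j+3).choose (j+2) : ℕ) : ℝ)
          = ((2*j+3).factorial : ℝ) / ((j+2).factorial * (j+1).factorial) := by
        rw [show j+j+3 = (j+2)+(j+1) by omega, cc, show (j+2)+(j+1) = 2*j+3 by omega]
      have q1 : ((2*j+4).factorial : ℝ) = (2*(j:ℝ)+4) * (2*j+3).factorial := by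
        rw [show 2*j+4 = (2*j+3)+1 by omega, fs]; push_cast; ring
      have q2 : ((2*j+5).factorial : ℝ) = (2*(j:ℝ)+5)*(2*(j:ℝ)+4) * (2*j+3).factorial := by
        rw [show 2*j+5 = (2*j+4)+1 by omega, fs, q1]; push_cast; ring
      have q3 : ((2*j+6).factorial : ℝ)
          = (2*(j:ℝ)+6)*(2*(j:ℝ)+5)*(2*(j:ℝ)+4) * (2*j+3).factorial := by
        rw [show 2*j+6 = (2*j+5)+1 by omega, fs, q2]; push_cast; ring
      have hq := (fpos (2*j+3)).ne'
      rw [z1, z2, z3, z4, c1, c2, c3, c4, q3, e3, e2, e1]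
      push_cast
      field_simp
      ring
    · -- n + 1 ≤ j
      have z1 : n.choose (j+3) = 0 := Nat.choose_eq_zero_of_lt (by omega)
      have z2 : (n+1).choose (j+3) = 0 := Nat.choose_eq_zero_of_lt (by omega)
      have z3 : (n+2).choose (j+3) = 0 := Nat.choose_eq_zero_of_lt (by omega)
      have z4 : (n+3).choose (j+3) = 0 := Nat.choose_eq_zero_of_lt (by omega)
      have z5 : n.choose (j+1) = 0 := Nat.choose_eq_zero_of_lt (by omega)
      have z6 : n.choose j = 0 := Nat.choose_eq_zero_of_lt (by omega)
      rw [z1, z2, z3, z4, z5, z6]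
      norm_num

theorem genJacobi_neg2neg1_legendre (k : ℕ) (hk : 3 ≤ k) (x : ℝ) :
    (1 - x) ^ 2 * (1 + x) * jacobiR (k - 3) 2 1 x =
      (4 / (((k : ℝ) - 1) * (2 * (k : ℝ) - 3))) *
        (legendreL (k - 3) x - ((2 * (k : ℝ) - 3) / (2 * (k : ℝ) - 1)) * legendreL (k - 2) x -
          legendreL (k - 1) x + ((2 * (k : ℝ) - 3) / (2 * (k : ℝ) - 1)) * legendreL k x) := by
  obtain ⟨n, rfl⟩ : ∃ n, k = n + 3 := ⟨k - 3, by omega⟩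
  rw [show n+3-3 = n by omega, show n+3-2 = n+1 by omega, show n+3-1 = n+2 by omega,
      show ((n+3 : ℕ) : ℝ) = (n:ℝ)+3 by push_cast; ring]
  rw [jacobiR21_eq, legendreL_eq n, legendreL_eq (n+1), legendreL_eq (n+2), legendreL_eq (n+3)]
  set y : ℝ := (x-1)/2 with hy
  have hx : x = 2*y + 1 := by rw [hy]; ring
  set K : ℝ := 4 / (((n:ℝ)+2)*(2*(n:ℝ)+3)) with hK
  set c : ℝ := (2*(n:ℝ)+3)/(2*(n:ℝ)+5) with hc
  have hKc : 4 / (((n:ℝ)+3-1) * (2*((n:ℝ)+3)-3)) = K := by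
    rw [hK, show ((n:ℝ)+3-1) * (2*((n:ℝ)+3)-3) = ((n:ℝ)+2)*(2*(n:ℝ)+3) by ring]
  have hcc' : (2*((n:ℝ)+3)-3)/(2*((n:ℝ)+3)-1) = c := by
    rw [hc, show (2*((n:ℝ)+3)-3) = 2*(n:ℝ)+3 by ring, show (2*((n:ℝ)+3)-1) = 2*(n:ℝ)+5 by ring]
  rw [hKc, hcc']
  -- abbreviations
  set A : ℕ → ℝ := fun m =>
    2 * ((n.choose m : ℕ) : ℝ) * (((n+m+3).choose (m+2) : ℕ) : ℝ) / (((n:ℝ)+2)*((n:ℝ)+3))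
    with hA
  set b : ℕ → ℕ → ℝ := fun N m => ((N.choose m : ℕ) : ℝ) * (((N+m).choose m : ℕ) : ℝ) with hb
  -- extend the Legendre sums to range (n+4)
  have ext : ∀ N : ℕ, N + 1 ≤ n + 4 →
      (∑ m ∈ Finset.range (N+1), b N m * y^m) = ∑ m ∈ Finset.range (n+4), b N m * y^m := by
    intro N hN
    refine Finset.sum_subset (Finset.range_subset_range.mpr hN) ?_
    intro m _ hm
    have : N < m := by simpa [Finset.mem_range] using hm
    simp [hb, Nat.choose_eq_zero_of_lt this]
  have hsum : ∀ N : ℕ, (∑ m ∈ Finset.range (N+1),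
      ((N.choose m : ℕ) : ℝ) * (((N+m).choose m : ℕ) : ℝ) * y^m)
      = ∑ m ∈ Finset.range (N+1), b N m * y^m := by
    intro N; rfl
  rw [hsum n, hsum (n+1), hsum (n+2), hsum (n+3), ext n (by omega), ext (n+1) (by omega),
      ext (n+2) (by omega)]
  -- combine RHS into a single sum
  set g : ℕ → ℝ := fun j => K * (b n j - c * b (n+1) j - b (n+2) j + c * b (n+3) j) * y^j with hg
  have hRHS : K * ((∑ m ∈ Finset.range (n+4), b n m * y^m)
      - c * (∑ m ∈ Finset.range (n+4), b (n+1) m * y^m)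
      - (∑ m ∈ Finset.range (n+4), b (n+2) m * y^m)
      + c * (∑ m ∈ Finset.range (n+4), b (n+3) m * y^m))
      = ∑ j ∈ Finset.range (n+4), g j := by
    simp only [Finset.mul_sum, ← Finset.sum_sub_distrib, ← Finset.sum_add_distrib, hg]
    exact Finset.sum_congr rfl fun j _ => by ring
  rw [hRHS]
  -- peel three terms off the RHS sum
  have hpeel : ∑ j ∈ Finset.range (n+4), g j
      = (∑ j ∈ Finset.range (n+1), g (j+1+1+1)) + g (0+1+1) + g (0+1) + g 0 := by
    rw [show n+4 = (n+3)+1 from rfl, Finset.sum_range_succ',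
        show n+3 = (n+2)+1 from rfl, Finset.sum_range_succ',
        show n+2 = (n+1)+1 from rfl, Finset.sum_range_succ']
  rw [hpeel]
  -- rewrite the three boundary terms and the shifted sum via the key lemmas
  have hkey : ∀ j : ℕ, g (j+1+1+1) = (8 * A (j+1) + 8 * A j) * y^(j+3) := by
    intro j
    simp only [hg, hb, hA, hK, hc]
    linear_combination (key n j) * y^(j+3)
  rw [Finset.sum_congr rfl fun j _ => hkey j]
  have h2 : g (0+1+1) = 8 * A 0 * y^2 := by
    simp only [hg, hb, hA, hK, hc]
    linear_combination (key2 n) * y^2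
  have h1 : g (0+1) = 0 := by
    simp only [hg, hb, hA, hK, hc]
    linear_combination (key1 n) * y
  have h0 : g 0 = 0 := by
    simp only [hg, hb, hA, hK, hc]
    linear_combination (key0 n)
  rw [h2, h1, h0]
  -- now handle the LHS
  have hL : (1-x)^2*(1+x) * (∑ m ∈ Finset.range (n+1), A m * y^m)
      = (∑ m ∈ Finset.range (n+1), 8 * A m * y^(m+2))
        + (∑ m ∈ Finset.range (n+1), 8 * A m * y^(m+3)) := by
    rw [hx, ← Finset.sum_add_distrib, Finset.mul_sum]
    exact Finset.sum_congr rfl fun m _ => by ring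
  have hsumL : (∑ m ∈ Finset.range (n+1),
      2 * ((n.choose m : ℕ) : ℝ) * (((n+m+3).choose (m+2) : ℕ) : ℝ) / (((n:ℝ)+2)*((n:ℝ)+3)) * y^m)
      = ∑ m ∈ Finset.range (n+1), A m * y^m := rfl
  rw [hsumL, hL]
  -- split shifted sums
  rw [Finset.sum_range_succ' (fun m => 8 * A m * y^(m+2)) n]
  have hAtop : A (n+1) = 0 := by
    simp [hA, Nat.choose_eq_zero_of_lt (Nat.lt_succ_self n)]
  have e1 : ∀ j : ℕ, (8 * A (j+1) + 8 * A j) * y^(j+3)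
      = 8 * A (j+1) * y^(j+1+2) + 8 * A j * y^(j+3) := fun j => by ring
  rw [Finset.sum_congr rfl fun j _ => e1 j, Finset.sum_add_distrib,
      Finset.sum_range_succ (fun j => 8 * A (j+1) * y^(j+1+2)) n, hAtop]
  ring
end

section
/- Define φ_k(x) = (1−x²)(1−x) R_k^{(2,1)}(x). Then its second derivative satisfies D²φ_k(x) = (2(k+3)(k+4)/(2k+5)) R_{k+1}^{(1,2)}(x) − ((k+1)(k+3)/((k+3/2)(k+5/2))) R_k^{(1,2)}(x) − (2k(k+1)/(2k+3)) R_{k-1}^{(1,2)}(x) for all k ≥ 1. -/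
open Finset Polynomial
open scoped Nat

lemma Real.Gamma_add_nat_eq_ascPochhammer_mul {s : ℝ} (hs : 0 < s) (m : ℕ) :
    Real.Gamma (s + m) = (ascPochhammer ℝ m).eval s * Real.Gamma s := by
  induction m with
  | zero => simp
  | succ m ih =>
    rw [Nat.cast_succ, ← add_assoc, Real.Gamma_add_one (by positivity), ih,
      ascPochhammer_succ_eval]
    ring

lemma one_add_mul_sum_range {R : Type*} [CommRing R] (c : ℕ → R) (n : ℕ) (t : R)
    (hc : c (n + 1) = 0) :
    (1 + t) * ∑ m ∈ range (n + 1), c m * t ^ m =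
      c 0 + ∑ m ∈ range (n + 1), (c (m + 1) + c m) * t ^ (m + 1) := by
  have hshift := sum_range_succ (fun m => c m * t ^ m) (n + 1)
  rw [sum_range_succ', hc, zero_mul, add_zero, pow_zero, mul_one] at hshift
  have hmul : ∑ m ∈ range (n + 1), t * (c m * t ^ m) = ∑ m ∈ range (n + 1), c m * t ^ (m + 1) :=
    sum_congr rfl fun m _ => by ring
  rw [add_mul, one_mul, mul_sum, ← hshift, hmul]
  simp only [add_mul, sum_add_distrib]
  ring

lemma iteratedDeriv_two_half_sub_pow (n : ℕ) (x : ℝ) :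
    iteratedDeriv 2 (fun y => ((y - 1) / 2) ^ (n + 2)) x =
      ((n + 1) * (n + 2) / 4) * ((x - 1) / 2) ^ n := by
  have h : (fun y : ℝ => ((y - 1) / 2) ^ (n + 2)) =
      fun y => (1 / 2) ^ (n + 2) * (y - 1) ^ (n + 2) := by
    funext y; rw [div_pow, one_div_pow]; ring
  have hshift := congrFun (iteratedDeriv_comp_sub_const 2 (fun z : ℝ => z ^ (n + 2)) 1) x
  beta_reduce at hshift
  rw [h, iteratedDeriv_const_mul_field, hshift, iteratedDeriv_pow]
  simp [Nat.descFactorial, div_pow]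
  ring

variable {a b : ℝ}

/-- `descPochhammer ℝ m` at `n` is `(-1)^m (-n)_m`, so this is the `m`-th term of the
hypergeometric series of `R_n^{(a,b)}` in powers of `(x - 1) / 2`. -/
noncomputable def jacobiRCoeff (n : ℕ) (a b : ℝ) (m : ℕ) : ℝ :=
  (descPochhammer ℝ m).eval (n : ℝ) * (ascPochhammer ℝ m).eval (n + a + b + 1) /
    (m ! * (ascPochhammer ℝ m).eval (a + 1))

@[simp]
lemma jacobiRCoeff_zero (n : ℕ) : jacobiRCoeff n a b 0 = 1 := by
  simp [jacobiRCoeff]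

lemma jacobiRCoeff_eq_zero_of_lt {n m : ℕ} (h : n < m) : jacobiRCoeff n a b m = 0 := by
  simp [jacobiRCoeff, descPochhammer_eval_coe_nat_of_lt h]

lemma jacobiP_eq_mul_sum (n : ℕ) (ha : -1 < a) (hab : -1 < a + b) (x : ℝ) :
    jacobiP n a b x = (ascPochhammer ℝ n).eval (a + 1) / n ! *
      ∑ m ∈ range (n + 1), jacobiRCoeff n a b m * ((x - 1) / 2) ^ m := by
  have hΓ : ∀ m : ℕ,
      Real.Gamma (a + m + 1) = (ascPochhammer ℝ m).eval (a + 1) * Real.Gamma (a + 1) := by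
    intro m
    rw [← Real.Gamma_add_nat_eq_ascPochhammer_mul (by linarith)]; ring_nf
  have hΓ' : ∀ m : ℕ, Real.Gamma (a + b + n + m + 1) =
      (ascPochhammer ℝ m).eval (n + a + b + 1) * Real.Gamma (a + b + n + 1) := by
    intro m
    rw [show a + b + n + 1 = n + a + b + 1 by ring,
      ← Real.Gamma_add_nat_eq_ascPochhammer_mul (by linarith [n.cast_nonneg (α := ℝ)])]; ring_nf
  have h1 : 0 < Real.Gamma (a + 1) := Real.Gamma_pos_of_pos (by linarith)
  have h2 : 0 < Real.Gamma (a + b + n + 1) :=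
    Real.Gamma_pos_of_pos (by linarith [n.cast_nonneg (α := ℝ)])
  unfold jacobiP jacobiRCoeff
  rw [hΓ, mul_sum, mul_sum]
  refine sum_congr rfl fun m _ => ?_
  have h3 : 0 < (ascPochhammer ℝ m).eval (a + 1) := ascPochhammer_pos _ _ (by linarith)
  rw [hΓ', hΓ, Nat.cast_choose_eq_descPochhammer_div]
  field_simp

lemma jacobiP_one (n : ℕ) (ha : -1 < a) (hab : -1 < a + b) :
    jacobiP n a b 1 = (ascPochhammer ℝ n).eval (a + 1) / n ! := by
  simp [jacobiP_eq_mul_sum n ha hab, sum_range_succ']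

lemma jacobiR_eq_sum {n N : ℕ} (hN : n < N) (ha : -1 < a) (hab : -1 < a + b) (x : ℝ) :
    jacobiR n a b x = ∑ m ∈ range N, jacobiRCoeff n a b m * ((x - 1) / 2) ^ m := by
  have hP : (ascPochhammer ℝ n).eval (a + 1) / n ! ≠ 0 :=
    (div_pos (ascPochhammer_pos _ _ (by linarith)) (by positivity)).ne'
  rw [jacobiR, jacobiP_eq_mul_sum n ha hab, jacobiP_one n ha hab, mul_div_cancel_left₀ _ hP]
  refine sum_subset (range_subset_range.2 hN) fun m _ hmn => ?_
  rw [jacobiRCoeff_eq_zero_of_lt (by simpa using hmn), zero_mul]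

lemma jacobiRCoeff_succ_right (n m : ℕ) (ha : -1 < a) :
    jacobiRCoeff n a b (m + 1) * ((m + 1) * (a + m + 1)) =
      jacobiRCoeff n a b m * ((n - m) * (n + a + b + m + 1)) := by
  have h := ascPochhammer_pos m (a + 1) (by linarith)
  have : a + 1 + m ≠ 0 := by linarith [m.cast_nonneg (α := ℝ)]
  unfold jacobiRCoeff
  rw [descPochhammer_succ_eval, ascPochhammer_succ_eval, ascPochhammer_succ_eval,
    Nat.factorial_succ]
  push_cast
  field_simp
  ring

lemma jacobiRCoeff_succ_succ (n m : ℕ) (ha : -1 < a) :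
    jacobiRCoeff (n + 1) a b (m + 1) * ((m + 1) * (a + m + 1) * (n + a + b + 1)) =
      jacobiRCoeff n a b m * ((n + 1) * (n + a + b + m + 1) * (n + a + b + m + 2)) := by
  have h := ascPochhammer_pos m (a + 1) (by linarith)
  have : 0 < a + m + 1 := by linarith [m.cast_nonneg (α := ℝ)]
  have hasc : (ascPochhammer ℝ (m + 1)).eval ((n : ℝ) + 1 + a + b + 1) * (n + a + b + 1) =
      (ascPochhammer ℝ m).eval (n + a + b + 1) * ((n + a + b + m + 1) * (n + a + b + m + 2)) := by
    have := congrArg (eval ((n : ℝ) + a + b + 1)) (ascPochhammer_succ_left ℝ (m + 1))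
    rw [ascPochhammer_succ_eval, ascPochhammer_succ_eval, eval_mul, eval_X, eval_comp, eval_add,
      eval_X, eval_one] at this
    push_cast at this
    rw [show (n : ℝ) + 1 + a + b + 1 = n + a + b + 1 + 1 by ring]
    linear_combination (-1 : ℝ) * this
  have hdesc : (descPochhammer ℝ (m + 1)).eval ((n + 1 : ℕ) : ℝ) =
      (n + 1) * (descPochhammer ℝ m).eval (n : ℝ) := by
    rw [descPochhammer_succ_left, eval_mul, eval_X, eval_comp, eval_sub, eval_X, eval_one]
    push_cast; ring_nf
  unfold jacobiRCoeff
  rw [hdesc, ascPochhammer_succ_eval m (a + 1), Nat.factorial_succ]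
  have : 0 < a + 1 + m := by linarith
  push_cast
  rw [div_mul_eq_mul_div, div_mul_eq_mul_div, div_eq_div_iff (by positivity) (by positivity)]
  linear_combination ((n + 1) * eval (n : ℝ) (descPochhammer ℝ m) * (m + 1) * (a + m + 1) * m ! *
    eval (a + 1) (ascPochhammer ℝ m)) * hasc

lemma jacobiRCoeff_add_one_left_mul (n m : ℕ) (ha : -1 < a) :
    jacobiRCoeff n (a + 1) b m * (a + m + 1) = (a + 1) * jacobiRCoeff n a (b + 1) m := by
  have h := ascPochhammer_pos m (a + 1) (by linarith)
  have h' := ascPochhammer_pos m (a + 1 + 1) (by linarith)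
  have hasc := congrArg (eval (a + 1)) (ascPochhammer_succ_left ℝ m)
  rw [ascPochhammer_succ_eval, eval_mul, eval_X, eval_comp, eval_add, eval_X, eval_one] at hasc
  unfold jacobiRCoeff
  rw [show (n : ℝ) + (a + 1) + b + 1 = n + a + (b + 1) + 1 by ring]
  field_simp
  linear_combination (eval (n : ℝ) (descPochhammer ℝ m) *
    eval ((n : ℝ) + a + (b + 1) + 1) (ascPochhammer ℝ m)) * hasc

lemma jacobiRCoeff_basis3_succ (k p : ℕ) (hk : 1 ≤ k) :
    2 * ((p : ℝ) + 2) * ((p : ℝ) + 3) * (jacobiRCoeff k 2 1 (p + 1) + jacobiRCoeff k 2 1 p) =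
      (2 * ((k : ℝ) + 3) * ((k : ℝ) + 4) / (2 * (k : ℝ) + 5)) * jacobiRCoeff (k + 1) 1 2 (p + 1) -
        (((k : ℝ) + 1) * ((k : ℝ) + 3) / (((k : ℝ) + 3 / 2) * ((k : ℝ) + 5 / 2))) *
          jacobiRCoeff k 1 2 (p + 1) -
        (2 * (k : ℝ) * ((k : ℝ) + 1) / (2 * (k : ℝ) + 3)) * jacobiRCoeff (k - 1) 1 2 (p + 1) := by
  obtain ⟨j, rfl⟩ : ∃ j, k = j + 1 := ⟨k - 1, by omega⟩
  have hA (m : ℕ) : jacobiRCoeff (j + 1) 2 1 m = 2 * jacobiRCoeff (j + 1) 1 2 m / (m + 2) := by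
    have h := jacobiRCoeff_add_one_left_mul (j + 1) m (a := 1) (b := 1) (by norm_num)
    norm_num at h
    rw [eq_div_iff (by positivity)]
    linear_combination h
  have hm_k := jacobiRCoeff_succ_right (j + 1) p (a := 1) (b := 2) (by norm_num)
  have hn_k := jacobiRCoeff_succ_succ (j + 1) p (a := 1) (b := 2) (by norm_num)
  have hm_j := jacobiRCoeff_succ_right j p (a := 1) (b := 2) (by norm_num)
  have hn_j := jacobiRCoeff_succ_succ j p (a := 1) (b := 2) (by norm_num)
  simp only [Nat.add_sub_cancel, hA]
  push_cast at hm_k hn_k hm_j hn_j ⊢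
  have hBk : jacobiRCoeff (j + 1) 1 2 (p + 1) = jacobiRCoeff (j + 1) 1 2 p *
      ((j + 1 - p) * (j + p + 5)) / ((p + 1) * (p + 2)) := by
    rw [eq_div_iff (by positivity)]; linear_combination hm_k
  have hBk1 : jacobiRCoeff (j + 1 + 1) 1 2 (p + 1) = jacobiRCoeff (j + 1) 1 2 p *
      ((j + 2) * (j + p + 5) * (j + p + 6)) / ((p + 1) * (p + 2) * (j + 5)) := by
    rw [eq_div_iff (by positivity)]; linear_combination hn_k
  have hBj : jacobiRCoeff j 1 2 p = jacobiRCoeff (j + 1) 1 2 (p + 1) *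
      ((p + 1) * (p + 2) * (j + 4)) / ((j + 1) * (j + p + 4) * (j + p + 5)) := by
    rw [eq_div_iff (by positivity)]; linear_combination -hn_j
  have hBj1 : jacobiRCoeff j 1 2 (p + 1) = jacobiRCoeff j 1 2 p *
      ((j - p) * (j + p + 4)) / ((p + 1) * (p + 2)) := by
    rw [eq_div_iff (by positivity)]; linear_combination hm_j
  rw [hBj1, hBj, hBk1, hBk]
  field_simp
  ring

lemma mul_jacobiR21_eq_sum (k : ℕ) (y : ℝ) :
    (1 - y ^ 2) * (1 - y) * jacobiR k 2 1 y =
      8 * jacobiRCoeff k 2 1 0 * ((y - 1) / 2) ^ (0 + 2) +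
        ∑ p ∈ range (k + 1), 8 * (jacobiRCoeff k 2 1 (p + 1) + jacobiRCoeff k 2 1 p) *
          ((y - 1) / 2) ^ (p + 1 + 2) := by
  have hR := one_add_mul_sum_range (jacobiRCoeff k 2 1) k ((y - 1) / 2)
    (jacobiRCoeff_eq_zero_of_lt (lt_add_one k))
  rw [jacobiR_eq_sum (lt_add_one k) (by norm_num) (by norm_num),
    show (1 - y ^ 2) * (1 - y) = 8 * ((y - 1) / 2) ^ 2 * (1 + (y - 1) / 2) by ring,
    mul_assoc, hR, mul_add, mul_sum]
  congr 1
  · ring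
  · exact sum_congr rfl fun p _ => by ring

theorem secondDeriv_basis3 (k : ℕ) (hk : 1 ≤ k) (x : ℝ) :
    iteratedDeriv 2 (fun y => (1 - y ^ 2) * (1 - y) * jacobiR k 2 1 y) x =
      (2 * ((k : ℝ) + 3) * ((k : ℝ) + 4) / (2 * (k : ℝ) + 5)) * jacobiR (k + 1) 1 2 x -
        (((k : ℝ) + 1) * ((k : ℝ) + 3) / (((k : ℝ) + 3 / 2) * ((k : ℝ) + 5 / 2))) *
          jacobiR k 1 2 x -
        (2 * (k : ℝ) * ((k : ℝ) + 1) / (2 * (k : ℝ) + 3)) * jacobiR (k - 1) 1 2 x := by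
  rw [jacobiR_eq_sum (n := k + 1) (N := k + 2) (by omega) (by norm_num) (by norm_num),
    jacobiR_eq_sum (n := k) (N := k + 2) (by omega) (by norm_num) (by norm_num),
    jacobiR_eq_sum (n := k - 1) (N := k + 2) (by omega) (by norm_num) (by norm_num),
    mul_sum, mul_sum, mul_sum, ← sum_sub_distrib, ← sum_sub_distrib, sum_range_succ', add_comm,
    funext (mul_jacobiR21_eq_sum k), iteratedDeriv_fun_add (by fun_prop) (by fun_prop),
    iteratedDeriv_const_mul_field, iteratedDeriv_fun_sum (fun p _ => by fun_prop)]
  simp only [iteratedDeriv_const_mul_field, iteratedDeriv_two_half_sub_pow]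
  congr 1
  · simp only [jacobiRCoeff_zero]
    field_simp
    ring
  · refine sum_congr rfl fun p _ => ?_
    push_cast
    linear_combination ((x - 1) / 2) ^ (p + 1) * jacobiRCoeff_basis3_succ k p hk
end
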